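/- Let n ≥ 1, let Σ be a p×p real positive semidefinite matrix, let z₁, …, zₙ be i.i.d. random vectors in ℝᵖ each with the centered Gaussian distribution N(0, Σ), and set S = (1/n) Σ_{i=1}^{n} zᵢ zᵢᵀ. With kₙ = n² / ((n−1)(n+2)) (assuming n ≥ 2), the statistic kₙ [ tr(S²) − (tr S)²/n ] is an unbiased estimator of tr(Σ²), i.e. E{ kₙ [ tr(S²) − (tr S)²/n ] } = tr(Σ²). -/

import Mathlib

/-!
Every linear functional of a centered Gaussian vector is a real Gaussian `N(0, σ²)`, whose fourth
moment is `3σ⁴`; polarizing `(a + b)⁴ + (a - b)⁴` turns this into the Isserlis formula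
`E[x_k² x_l²] = Σ_kk Σ_ll + 2 Σ_kl²`, hence `E‖z‖⁴ = 2 tr(Σ²) + (tr Σ)²` for `z ~ N(0, Σ)`.
For any i.i.d. sample with second-moment matrix `Σ` and `q = E‖z‖⁴`, expanding
`tr(S²) = n⁻² ∑ᵢⱼ (zᵢ ⬝ zⱼ)²` and `(tr S)² = n⁻² (∑ᵢ ‖zᵢ‖²)²` and using independence off the
diagonal gives `E[tr(S²) - (tr S)²/n] = (n - 1)/n² · (q + n tr(Σ²) - (tr Σ)²)`. With the Gaussian
value of `q` this is `(n - 1)(n + 2)/n² · tr(Σ²)`, which `kₙ` cancels.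
-/

open MeasureTheory ProbabilityTheory Matrix

/-- The standard Gaussian measure on `ℝᵖ`: the `p`-fold product of the standard
Gaussian measure on `ℝ`. -/
noncomputable def stdGaussian (p : ℕ) : Measure (Fin p → ℝ) :=
  Measure.pi fun _ => gaussianReal 0 1

/-- The centered Gaussian measure on `ℝᵖ` with covariance `A * Aᵀ`: the law of `A g`
for a standard Gaussian vector `g`. -/
noncomputable def gaussianCov {p : ℕ} (A : Matrix (Fin p) (Fin p) ℝ) : Measure (Fin p → ℝ) :=
  Measure.map (fun g => A.mulVec g) (stdGaussian p)

/-- The (uncentered) sample covariance matrix `S = (1/n) Σᵢ zᵢ zᵢᵀ`. -/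
noncomputable def sampleCov {Ω : Type*} {p : ℕ} (n : ℕ) (z : Fin n → Ω → (Fin p → ℝ)) (ω : Ω) :
    Matrix (Fin p) (Fin p) ℝ :=
  (n : ℝ)⁻¹ • ∑ i, Matrix.vecMulVec (z i ω) (z i ω)

open scoped NNReal RealInnerProductSpace

namespace ProbabilityTheory.IsGaussian

variable {E : Type*} [NormedAddCommGroup E] [NormedSpace ℝ E] [MeasurableSpace E] [BorelSpace E]
  (μ : Measure E) [IsGaussian μ]

lemma integrable_dual_pow (L : StrongDual ℝ E) (k : ℕ) : Integrable (fun x => L x ^ k) μ := by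
  refine (integrable_norm_iff (by fun_prop)).1 ?_
  simpa [norm_pow] using (IsGaussian.memLp_dual μ L k (by simp)).integrable_norm_pow'

lemma integrable_dual_pow_mul_pow (L₁ L₂ : StrongDual ℝ E) (a b : ℕ) :
    Integrable (fun x => L₁ x ^ a * L₂ x ^ b) μ := by
  refine ((integrable_dual_pow μ L₁ (2 * a)).add (integrable_dual_pow μ L₂ (2 * b))).mono'
    (by fun_prop) (ae_of_all _ fun x => ?_)
  rw [Pi.add_apply, norm_mul, Real.norm_eq_abs, Real.norm_eq_abs, pow_mul', pow_mul',
    ← sq_abs (L₁ x ^ a), ← sq_abs (L₂ x ^ b)]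
  nlinarith [sq_nonneg (|L₁ x ^ a| - |L₂ x ^ b|)]

end ProbabilityTheory.IsGaussian

lemma integral_sq_gaussianReal (v : ℝ≥0) : ∫ x, x ^ 2 ∂gaussianReal 0 v = v := by
  simpa [integral_id_gaussianReal] using
    (variance_eq_integral (X := id) (μ := gaussianReal 0 v) aemeasurable_id).symm.trans
      variance_id_gaussianReal

/-- The sum of two independent copies of `N(0, v)` is both `N(0, 2v)` and `√2` times one copy:
comparing fourth moments gives `2 m₄ + 6 v² = 4 m₄`. -/
lemma integral_pow_four_gaussianReal (v : ℝ≥0) : ∫ x, x ^ 4 ∂gaussianReal 0 v = 3 * v ^ 2 := by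
  have hsum : gaussianReal 0 (v + v) =
      ((gaussianReal 0 v).prod (gaussianReal 0 v)).map (fun z => z.1 + z.2) := by
    rw [← Measure.conv, gaussianReal_conv_gaussianReal, zero_add]
  have hscale : gaussianReal 0 (v + v) = (gaussianReal 0 v).map (fun x => √2 * x) := by
    rw [gaussianReal_map_const_mul, mul_zero]
    congr 1
    ext
    simp [two_mul]
  have hint (k : ℕ) : Integrable (fun x => x ^ k) (gaussianReal 0 v) :=
    IsGaussian.integrable_dual_pow _ (ContinuousLinearMap.id ℝ ℝ) k
  have h_scale : ∫ x, x ^ 4 ∂gaussianReal 0 (v + v) = 4 * ∫ x, x ^ 4 ∂gaussianReal 0 v := by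
    rw [hscale, integral_map (by fun_prop) (by fun_prop)]
    simp_rw [mul_pow, show √2 ^ 4 = (4 : ℝ) by rw [show 4 = 2 * 2 by rfl, pow_mul]; norm_num]
    exact integral_const_mul _ _
  have h_sum : ∫ x, x ^ 4 ∂gaussianReal 0 (v + v) =
      2 * (∫ x, x ^ 4 ∂gaussianReal 0 v) + 6 * v ^ 2 := by
    rw [hsum, integral_map (by fun_prop) (by fun_prop)]
    simp_rw [add_pow]
    rw [integral_finsetSum _ fun k _ => ((hint k).mul_prod (hint (4 - k))).mul_const _]
    have hprod (a b : ℕ) : ∫ z, z.1 ^ a * z.2 ^ b ∂((gaussianReal 0 v).prod (gaussianReal 0 v)) =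
        (∫ x, x ^ a ∂gaussianReal 0 v) * ∫ x, x ^ b ∂gaussianReal 0 v :=
      integral_prod_mul _ _
    simp_rw [integral_mul_const, hprod]
    norm_num [Finset.sum_range_succ, integral_id_gaussianReal, integral_sq_gaussianReal,
      Nat.choose]
    ring
  linarith

namespace ProbabilityTheory.IsGaussian

variable {E : Type*} [NormedAddCommGroup E] [NormedSpace ℝ E] [MeasurableSpace E] [BorelSpace E]
  [CompleteSpace E] [SecondCountableTopology E] {μ : Measure E} [IsGaussian μ]

lemma integral_dual_pow_four (hμ : ∀ L : StrongDual ℝ E, μ[L] = 0) (L : StrongDual ℝ E) :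
    ∫ x, L x ^ 4 ∂μ = 3 * covarianceBilinDual μ L L ^ 2 := by
  rw [covarianceBilinDual_self_eq_variance IsGaussian.memLp_two_id,
    ← integral_map (f := fun y => y ^ 4) (by fun_prop) (by fun_prop),
    IsGaussian.map_eq_gaussianReal, hμ, integral_pow_four_gaussianReal,
    Real.coe_toNNReal _ (variance_nonneg _ _)]

lemma integral_dual_sq_mul_sq (hμ : ∀ L : StrongDual ℝ E, μ[L] = 0) (L₁ L₂ : StrongDual ℝ E) :
    ∫ x, L₁ x ^ 2 * L₂ x ^ 2 ∂μ =
      covarianceBilinDual μ L₁ L₁ * covarianceBilinDual μ L₂ L₂ +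
        2 * covarianceBilinDual μ L₁ L₂ ^ 2 := by
  have polarization (x : E) : L₁ x ^ 2 * L₂ x ^ 2 =
      ((L₁ + L₂) x ^ 4 + (L₁ - L₂) x ^ 4 - 2 * L₁ x ^ 4 - 2 * L₂ x ^ 4) / 12 := by
    simp only [_root_.add_apply, _root_.sub_apply]
    ring
  have hint (L : StrongDual ℝ E) := integrable_dual_pow μ L 4
  simp_rw [polarization]
  rw [integral_div, integral_sub, integral_sub, integral_add, integral_const_mul,
    integral_const_mul]
  · simp only [integral_dual_pow_four hμ]
    simp only [map_add, map_sub, _root_.add_apply, _root_.sub_apply,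
      covarianceBilinDual_comm L₂ L₁]
    ring
  all_goals fun_prop

end ProbabilityTheory.IsGaussian

section StdGaussian

variable {E : Type*} [NormedAddCommGroup E] [InnerProductSpace ℝ E] [FiniteDimensional ℝ E]
  [MeasurableSpace E] [BorelSpace E]

lemma covarianceBilinDual_stdGaussian_innerSL (u w : E) :
    covarianceBilinDual (ProbabilityTheory.stdGaussian E) (innerSL ℝ u) (innerSL ℝ w) = ⟪u, w⟫ := by
  change covarianceBilin _ u w = _
  rw [covarianceBilin_stdGaussian]
  rfl

lemma integral_inner_mul_inner_stdGaussian (u w : E) :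
    ∫ y, ⟪u, y⟫ * ⟪w, y⟫ ∂ProbabilityTheory.stdGaussian E = ⟪u, w⟫ := by
  rw [← covarianceBilinDual_stdGaussian_innerSL, covarianceBilinDual_apply' IsGaussian.memLp_two_id]
  simp

lemma integral_inner_sq_mul_inner_sq_stdGaussian (u w : E) :
    ∫ y, ⟪u, y⟫ ^ 2 * ⟪w, y⟫ ^ 2 ∂ProbabilityTheory.stdGaussian E =
      ‖u‖ ^ 2 * ‖w‖ ^ 2 + 2 * ⟪u, w⟫ ^ 2 := by
  simpa [covarianceBilinDual_stdGaussian_innerSL, real_inner_self_eq_norm_sq] using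
    IsGaussian.integral_dual_sq_mul_sq integral_strongDual_stdGaussian (innerSL ℝ u) (innerSL ℝ w)

end StdGaussian

noncomputable def secondMoment {ι : Type*} (ν : Measure (ι → ℝ)) : Matrix ι ι ℝ :=
  Matrix.of fun k l => ∫ x, x k * x l ∂ν

@[simp]
lemma secondMoment_apply {ι : Type*} (ν : Measure (ι → ℝ)) (k l : ι) :
    secondMoment ν k l = ∫ x, x k * x l ∂ν := rfl

lemma secondMoment_comm {ι : Type*} (ν : Measure (ι → ℝ)) (k l : ι) :
    secondMoment ν k l = secondMoment ν l k := by
  simp only [secondMoment_apply, mul_comm]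

lemma sq_dotProduct {ι : Type*} [Fintype ι] (u v : ι → ℝ) :
    (u ⬝ᵥ v) ^ 2 = ∑ k, ∑ l, u k * u l * (v k * v l) := by
  simp only [dotProduct, sq, Finset.sum_mul_sum]
  exact Finset.sum_congr rfl fun k _ => Finset.sum_congr rfl fun l _ => mul_mul_mul_comm ..

lemma sq_dotProduct_self {ι : Type*} [Fintype ι] (x : ι → ℝ) :
    (x ⬝ᵥ x) ^ 2 = ∑ k, ∑ l, x k ^ 2 * x l ^ 2 := by
  simp only [sq_dotProduct, ← sq, mul_pow]

section GaussianCov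

variable {p : ℕ} (A : Matrix (Fin p) (Fin p) ℝ)

/-- Mathlib's `ProbabilityTheory.stdGaussian` on `EuclideanSpace` is the product measure
`_root_.stdGaussian p` transported along `toLp`; its covariance form is the inner product. -/
lemma gaussianCov_eq_map_stdGaussian :
    gaussianCov A = (ProbabilityTheory.stdGaussian (EuclideanSpace ℝ (Fin p))).map
      (fun y => A *ᵥ WithLp.ofLp y) := by
  rw [gaussianCov, _root_.stdGaussian, ← map_pi_eq_stdGaussian,
    Measure.map_map (by fun_prop) (by fun_prop)]
  rfl

lemma mulVec_ofLp_eq_inner (y : EuclideanSpace ℝ (Fin p)) (k : Fin p) :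
    (A *ᵥ WithLp.ofLp y) k = ⟪WithLp.toLp 2 (A k), y⟫ := by
  simp [EuclideanSpace.inner_eq_star_dotProduct, mulVec, dotProduct_comm]

lemma inner_toLp_toLp_eq_mul_transpose (k l : Fin p) :
    ⟪WithLp.toLp 2 (A k), WithLp.toLp 2 (A l)⟫ = (A * Aᵀ) k l := by
  simp [EuclideanSpace.inner_eq_star_dotProduct, mul_apply, dotProduct, mul_comm]

lemma integral_comp_gaussianCov {F : (Fin p → ℝ) → ℝ} (hF : Continuous F) :
    ∫ x, F x ∂gaussianCov A =
      ∫ y, F (A *ᵥ WithLp.ofLp y) ∂ProbabilityTheory.stdGaussian (EuclideanSpace ℝ (Fin p)) := by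
  rw [gaussianCov_eq_map_stdGaussian, integral_map (by fun_prop) hF.aestronglyMeasurable]

lemma integrable_gaussianCov_iff {F : (Fin p → ℝ) → ℝ} (hF : Continuous F) :
    Integrable F (gaussianCov A) ↔
      Integrable (fun y => F (A *ᵥ WithLp.ofLp y))
        (ProbabilityTheory.stdGaussian (EuclideanSpace ℝ (Fin p))) := by
  rw [gaussianCov_eq_map_stdGaussian, integrable_map_measure hF.aestronglyMeasurable (by fun_prop)]
  rfl

lemma integrable_pow_mul_pow_gaussianCov (k l : Fin p) (a b : ℕ) :
    Integrable (fun x => x k ^ a * x l ^ b) (gaussianCov A) := by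
  rw [integrable_gaussianCov_iff A (by fun_prop)]
  simpa only [mulVec_ofLp_eq_inner, innerSL_apply_apply] using
    IsGaussian.integrable_dual_pow_mul_pow _ (innerSL ℝ (WithLp.toLp 2 (A k)))
      (innerSL ℝ (WithLp.toLp 2 (A l))) a b

lemma secondMoment_gaussianCov : secondMoment (gaussianCov A) = A * Aᵀ := by
  ext k l
  rw [secondMoment_apply, integral_comp_gaussianCov A (by fun_prop)]
  simp only [mulVec_ofLp_eq_inner, integral_inner_mul_inner_stdGaussian,
    inner_toLp_toLp_eq_mul_transpose]

lemma integral_sq_mul_sq_gaussianCov (k l : Fin p) :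
    ∫ x, x k ^ 2 * x l ^ 2 ∂gaussianCov A =
      (A * Aᵀ) k k * (A * Aᵀ) l l + 2 * (A * Aᵀ) k l ^ 2 := by
  rw [integral_comp_gaussianCov A (by fun_prop)]
  simp only [mulVec_ofLp_eq_inner, integral_inner_sq_mul_inner_sq_stdGaussian,
    ← inner_toLp_toLp_eq_mul_transpose, real_inner_self_eq_norm_sq]

lemma integrable_sq_dotProduct_self_gaussianCov :
    Integrable (fun x => (x ⬝ᵥ x) ^ 2) (gaussianCov A) := by
  simp only [sq_dotProduct_self]
  exact integrable_finsetSum _ fun k _ => integrable_finsetSum _ fun l _ =>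
    integrable_pow_mul_pow_gaussianCov A k l 2 2

lemma integral_sq_dotProduct_self_gaussianCov :
    ∫ x, (x ⬝ᵥ x) ^ 2 ∂gaussianCov A = 2 * ((A * Aᵀ) * (A * Aᵀ)).trace + (A * Aᵀ).trace ^ 2 := by
  simp only [sq_dotProduct_self]
  rw [integral_finsetSum _ fun k _ => integrable_finsetSum _ fun l _ =>
    integrable_pow_mul_pow_gaussianCov A k l 2 2]
  simp only [integral_finsetSum _ fun l _ => integrable_pow_mul_pow_gaussianCov A _ l 2 2,
    integral_sq_mul_sq_gaussianCov]
  simp only [trace, diag, mul_apply (M := A * Aᵀ), (isSymm_mul_transpose_self A).apply,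
    Finset.sum_add_distrib,
    ← Finset.mul_sum, ← Finset.sum_mul, sq]
  ring

end GaussianCov

namespace ProbabilityTheory

variable {Ω 𝓧 𝓨 : Type*} [MeasurableSpace Ω] [MeasurableSpace 𝓧] [MeasurableSpace 𝓨]
  {μ : Measure Ω} {ν₁ : Measure 𝓧} {ν₂ : Measure 𝓨} {X : Ω → 𝓧} {Y : Ω → 𝓨}
  {F : 𝓧 → ℝ} {G : 𝓨 → ℝ}

lemma HasLaw.integrable_comp (hX : HasLaw X ν₁ μ) (hF : Integrable F ν₁) :
    Integrable (F ∘ X) μ :=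
  (hX.map_eq ▸ hF).comp_aemeasurable hX.aemeasurable

lemma IndepFun.integrable_fun_comp_mul_comp (hXY : X ⟂ᵢ[μ] Y) (hX : HasLaw X ν₁ μ)
    (hY : HasLaw Y ν₂ μ) (hF : Measurable F) (hG : Measurable G) (hF₁ : Integrable F ν₁)
    (hG₁ : Integrable G ν₂) :
    Integrable (fun ω => F (X ω) * G (Y ω)) μ :=
  (hXY.comp hF hG).integrable_mul (hX.integrable_comp hF₁) (hY.integrable_comp hG₁)

end ProbabilityTheory

section IndependentPair

variable {Ω ι : Type*} [MeasurableSpace Ω] [Fintype ι] {μ : Measure Ω} {ν : Measure (ι → ℝ)}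
  {X Y : Ω → ι → ℝ}

lemma integrable_dotProduct_self (h₂ : ∀ k l, Integrable (fun x => x k * x l) ν) :
    Integrable (fun x => x ⬝ᵥ x) ν :=
  integrable_finsetSum _ fun k _ => h₂ k k

lemma integral_dotProduct_self (h₂ : ∀ k l, Integrable (fun x => x k * x l) ν) :
    ∫ x, x ⬝ᵥ x ∂ν = (secondMoment ν).trace := by
  simp only [dotProduct]
  rw [integral_finsetSum _ fun k _ => h₂ k k]
  rfl

variable (hXY : X ⟂ᵢ[μ] Y) (hX : HasLaw X ν μ) (hY : HasLaw Y ν μ)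
  (h₂ : ∀ k l, Integrable (fun x => x k * x l) ν)
include hXY hX hY h₂

lemma integrable_sq_dotProduct_of_indepFun : Integrable (fun ω => (X ω ⬝ᵥ Y ω) ^ 2) μ := by
  simp only [sq_dotProduct]
  exact integrable_finsetSum _ fun k _ => integrable_finsetSum _ fun l _ =>
    hXY.integrable_fun_comp_mul_comp hX hY (by fun_prop) (by fun_prop) (h₂ k l) (h₂ k l)

lemma integral_sq_dotProduct_of_indepFun :
    ∫ ω, (X ω ⬝ᵥ Y ω) ^ 2 ∂μ = (secondMoment ν * secondMoment ν).trace := by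
  have hint (k l : ι) : Integrable (fun ω => X ω k * X ω l * (Y ω k * Y ω l)) μ :=
    hXY.integrable_fun_comp_mul_comp hX hY (by fun_prop) (by fun_prop) (h₂ k l) (h₂ k l)
  have hpair (k l : ι) : ∫ ω, X ω k * X ω l * (Y ω k * Y ω l) ∂μ = secondMoment ν k l ^ 2 := by
    rw [hXY.integral_fun_comp_mul_comp (f := fun x => x k * x l) (g := fun x => x k * x l)
      hX.aemeasurable hY.aemeasurable (hX.map_eq ▸ (h₂ k l).aestronglyMeasurable)
      (hY.map_eq ▸ (h₂ k l).aestronglyMeasurable), sq, secondMoment_apply]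
    exact congr_arg₂ (· * ·)
      (hX.integral_comp (f := fun x => x k * x l) (h₂ k l).aestronglyMeasurable)
      (hY.integral_comp (f := fun x => x k * x l) (h₂ k l).aestronglyMeasurable)
  simp only [sq_dotProduct]
  rw [integral_finsetSum _ fun k _ => integrable_finsetSum _ fun l _ => hint k l]
  refine Finset.sum_congr rfl fun k _ => ?_
  rw [integral_finsetSum _ fun l _ => hint k l]
  exact Finset.sum_congr rfl fun l _ => by
    rw [hpair, sq]
    exact congrArg (secondMoment ν k l * ·) (secondMoment_comm ν k l)

lemma integrable_dotProduct_self_mul_of_indepFun :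
    Integrable (fun ω => (X ω ⬝ᵥ X ω) * (Y ω ⬝ᵥ Y ω)) μ :=
  hXY.integrable_fun_comp_mul_comp hX hY (by fun_prop) (by fun_prop)
    (integrable_dotProduct_self h₂) (integrable_dotProduct_self h₂)

lemma integral_dotProduct_self_mul_of_indepFun :
    ∫ ω, (X ω ⬝ᵥ X ω) * (Y ω ⬝ᵥ Y ω) ∂μ = (secondMoment ν).trace ^ 2 := by
  have hmeas := (integrable_dotProduct_self h₂).aestronglyMeasurable
  rw [hXY.integral_fun_comp_mul_comp (f := fun x => x ⬝ᵥ x) (g := fun x => x ⬝ᵥ x)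
    hX.aemeasurable hY.aemeasurable (hX.map_eq ▸ hmeas) (hY.map_eq ▸ hmeas), sq,
    ← integral_dotProduct_self h₂]
  exact congr_arg₂ (· * ·) (hX.integral_comp (f := fun x => x ⬝ᵥ x) hmeas)
    (hY.integral_comp (f := fun x => x ⬝ᵥ x) hmeas)

end IndependentPair

lemma sum_sum_ite_eq {ι R : Type*} [Fintype ι] [DecidableEq ι] [CommRing R] (a b : R) :
    ∑ i : ι, ∑ j : ι, (if i = j then a else b) =
      Fintype.card ι * a + ((Fintype.card ι : R) ^ 2 - Fintype.card ι) * b := by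
  have (i : ι) : (if i = · then a else b) = fun j => b + if i = j then a - b else 0 := by
    ext j; split_ifs <;> ring
  simp only [this, Finset.sum_add_distrib, Finset.sum_ite_eq, Finset.mem_univ, if_true,
    Finset.sum_const, Finset.card_univ, nsmul_eq_mul]
  ring

section Sample

variable {Ω ι : Type*} [MeasurableSpace Ω] [Fintype ι] {μ : Measure Ω} {ν : Measure (ι → ℝ)}
  {n : ℕ} {z : Fin n → Ω → ι → ℝ} (hz : ∀ i, HasLaw (z i) ν μ) (hindep : iIndepFun z μ)
  (h₂ : ∀ k l, Integrable (fun x => x k * x l) ν) (h₄ : Integrable (fun x => (x ⬝ᵥ x) ^ 2) ν)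
include hz hindep h₂ h₄

lemma integrable_sq_dotProduct_of_iIndepFun (i j : Fin n) :
    Integrable (fun ω => (z i ω ⬝ᵥ z j ω) ^ 2) μ := by
  rcases eq_or_ne i j with rfl | hij
  · exact (hz i).integrable_comp h₄
  · exact integrable_sq_dotProduct_of_indepFun (hindep.indepFun hij) (hz i) (hz j) h₂

lemma integral_sq_dotProduct_of_iIndepFun (i j : Fin n) :
    ∫ ω, (z i ω ⬝ᵥ z j ω) ^ 2 ∂μ =
      if i = j then ∫ x, (x ⬝ᵥ x) ^ 2 ∂ν else (secondMoment ν * secondMoment ν).trace := by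
  split_ifs with hij
  · subst hij
    exact (hz i).integral_comp (f := fun x => (x ⬝ᵥ x) ^ 2) h₄.aestronglyMeasurable
  · exact integral_sq_dotProduct_of_indepFun (hindep.indepFun hij) (hz i) (hz j) h₂

lemma integrable_dotProduct_self_mul_of_iIndepFun (i j : Fin n) :
    Integrable (fun ω => (z i ω ⬝ᵥ z i ω) * (z j ω ⬝ᵥ z j ω)) μ := by
  rcases eq_or_ne i j with rfl | hij
  · simpa only [sq, Function.comp_def] using (hz i).integrable_comp h₄
  · exact integrable_dotProduct_self_mul_of_indepFun (hindep.indepFun hij) (hz i) (hz j) h₂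

lemma integral_dotProduct_self_mul_of_iIndepFun (i j : Fin n) :
    ∫ ω, (z i ω ⬝ᵥ z i ω) * (z j ω ⬝ᵥ z j ω) ∂μ =
      if i = j then ∫ x, (x ⬝ᵥ x) ^ 2 ∂ν else (secondMoment ν).trace ^ 2 := by
  split_ifs with hij
  · subst hij
    simpa only [sq, Function.comp_def] using
      (hz i).integral_comp (f := fun x => (x ⬝ᵥ x) ^ 2) h₄.aestronglyMeasurable
  · exact integral_dotProduct_self_mul_of_indepFun (hindep.indepFun hij) (hz i) (hz j) h₂

lemma integrable_sum_sum_sq_dotProduct :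
    Integrable (fun ω => ∑ i, ∑ j, (z i ω ⬝ᵥ z j ω) ^ 2) μ :=
  integrable_finsetSum _ fun i _ => integrable_finsetSum _ fun j _ =>
    integrable_sq_dotProduct_of_iIndepFun hz hindep h₂ h₄ i j

lemma integral_sum_sum_sq_dotProduct :
    ∫ ω, ∑ i, ∑ j, (z i ω ⬝ᵥ z j ω) ^ 2 ∂μ =
      n * ∫ x, (x ⬝ᵥ x) ^ 2 ∂ν + ((n : ℝ) ^ 2 - n) * (secondMoment ν * secondMoment ν).trace := by
  rw [integral_finsetSum _ fun i _ => integrable_finsetSum _ fun j _ =>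
    integrable_sq_dotProduct_of_iIndepFun hz hindep h₂ h₄ i j]
  simp only [integral_finsetSum _ fun j _ =>
      integrable_sq_dotProduct_of_iIndepFun hz hindep h₂ h₄ _ j,
    integral_sq_dotProduct_of_iIndepFun hz hindep h₂ h₄, sum_sum_ite_eq, Fintype.card_fin]

lemma integrable_sq_sum_dotProduct_self :
    Integrable (fun ω => (∑ i, z i ω ⬝ᵥ z i ω) ^ 2) μ := by
  simp only [sq (∑ i, _), Finset.sum_mul_sum]
  exact integrable_finsetSum _ fun i _ => integrable_finsetSum _ fun j _ =>
    integrable_dotProduct_self_mul_of_iIndepFun hz hindep h₂ h₄ i j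

lemma integral_sq_sum_dotProduct_self :
    ∫ ω, (∑ i, z i ω ⬝ᵥ z i ω) ^ 2 ∂μ =
      n * ∫ x, (x ⬝ᵥ x) ^ 2 ∂ν + ((n : ℝ) ^ 2 - n) * (secondMoment ν).trace ^ 2 := by
  simp only [sq (∑ i, _), Finset.sum_mul_sum]
  rw [integral_finsetSum _ fun i _ => integrable_finsetSum _ fun j _ =>
    integrable_dotProduct_self_mul_of_iIndepFun hz hindep h₂ h₄ i j]
  simp only [integral_finsetSum _ fun j _ =>
      integrable_dotProduct_self_mul_of_iIndepFun hz hindep h₂ h₄ _ j,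
    integral_dotProduct_self_mul_of_iIndepFun hz hindep h₂ h₄, sum_sum_ite_eq, Fintype.card_fin]

end Sample

lemma trace_sampleCov {Ω : Type*} {n p : ℕ} (z : Fin n → Ω → (Fin p → ℝ)) (ω : Ω) :
    (sampleCov n z ω).trace = (n : ℝ)⁻¹ * ∑ i, z i ω ⬝ᵥ z i ω := by
  simp [sampleCov, trace_sum]

lemma trace_sampleCov_mul_self {Ω : Type*} {n p : ℕ} (z : Fin n → Ω → (Fin p → ℝ)) (ω : Ω) :
    (sampleCov n z ω * sampleCov n z ω).trace =
      (n : ℝ)⁻¹ ^ 2 * ∑ i, ∑ j, (z i ω ⬝ᵥ z j ω) ^ 2 := by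
  simp only [sampleCov, Algebra.mul_smul_comm, Finset.mul_sum, Algebra.smul_mul_assoc,
    Finset.sum_mul, vecMulVec_mul_vecMulVec, vecMulVec_smul, trace_smul, trace_sum,
    trace_vecMulVec, smul_eq_mul, sq]
  rw [Finset.sum_comm]
  ring_nf

theorem integral_trace_sampleCov_sq_sub {Ω : Type*} [MeasurableSpace Ω] {μ : Measure Ω}
    {n p : ℕ} {ν : Measure (Fin p → ℝ)} {z : Fin n → Ω → Fin p → ℝ} (hn : n ≠ 0)
    (hz : ∀ i, HasLaw (z i) ν μ) (hindep : iIndepFun z μ)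
    (h₂ : ∀ k l, Integrable (fun x => x k * x l) ν) (h₄ : Integrable (fun x => (x ⬝ᵥ x) ^ 2) ν) :
    ∫ ω, ((sampleCov n z ω * sampleCov n z ω).trace - (sampleCov n z ω).trace ^ 2 / n) ∂μ =
      ((n : ℝ) - 1) / n ^ 2 * (∫ x, (x ⬝ᵥ x) ^ 2 ∂ν +
        n * (secondMoment ν * secondMoment ν).trace - (secondMoment ν).trace ^ 2) := by
  have hpoint (ω : Ω) :
      (sampleCov n z ω * sampleCov n z ω).trace - (sampleCov n z ω).trace ^ 2 / n =
        (n : ℝ)⁻¹ ^ 2 * ∑ i, ∑ j, (z i ω ⬝ᵥ z j ω) ^ 2 -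
          (n : ℝ)⁻¹ ^ 3 * (∑ i, z i ω ⬝ᵥ z i ω) ^ 2 := by
    rw [trace_sampleCov_mul_self, trace_sampleCov]
    ring
  simp only [hpoint]
  rw [integral_sub ((integrable_sum_sum_sq_dotProduct hz hindep h₂ h₄).const_mul _)
      ((integrable_sq_sum_dotProduct_self hz hindep h₂ h₄).const_mul _),
    integral_const_mul, integral_const_mul, integral_sum_sum_sq_dotProduct hz hindep h₂ h₄,
    integral_sq_sum_dotProduct_self hz hindep h₂ h₄]
  field_simp
  ring

theorem unbiased_estimator_trace_sq_general {Ω : Type*} [MeasurableSpace Ω] (μ : Measure Ω)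
    (n p : ℕ) (hn : 2 ≤ n)
    (V A : Matrix (Fin p) (Fin p) ℝ) (hVA : V = A * Aᵀ)
    (z : Fin n → Ω → (Fin p → ℝ))
    (hmeas : ∀ i, Measurable (z i))
    (hindep : iIndepFun z μ)
    (hlaw : ∀ i, Measure.map (z i) μ = gaussianCov A) :
    ∫ ω, ((n : ℝ) ^ 2 / (((n : ℝ) - 1) * ((n : ℝ) + 2))) *
        ((sampleCov n z ω * sampleCov n z ω).trace - (sampleCov n z ω).trace ^ 2 / n) ∂μ
      = (V * V).trace := by
  subst hVA
  have hz (i : Fin n) : HasLaw (z i) (gaussianCov A) μ := ⟨(hmeas i).aemeasurable, hlaw i⟩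
  have h₂ (k l : Fin p) : Integrable (fun x => x k * x l) (gaussianCov A) := by
    simpa only [pow_one] using integrable_pow_mul_pow_gaussianCov A k l 1 1
  rw [integral_const_mul, integral_trace_sampleCov_sq_sub (by omega) hz hindep h₂
    (integrable_sq_dotProduct_self_gaussianCov A), integral_sq_dotProduct_self_gaussianCov,
    secondMoment_gaussianCov]
  have hn' : (2 : ℝ) ≤ n := by exact_mod_cast hn
  have h₁ : (n : ℝ) - 1 ≠ 0 := by linarith
  have h₃ : (n : ℝ) + 2 ≠ 0 := by linarith
  field_simp
  ring

/-- For i.i.d. `N(0, Σ)` vectors `z₁, …, zₙ` with `S = (1/n) Σᵢ zᵢ zᵢᵀ` and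
`kₙ = n²/((n−1)(n+2))`, the statistic `kₙ[tr(S²) − (tr S)²/n]` is an unbiased
estimator of `tr(Σ²)`. -/
theorem unbiased_estimator_trace_sq {Ω : Type*} [MeasurableSpace Ω] (μ : Measure Ω)
    [IsProbabilityMeasure μ]
    (n p : ℕ) (hn : 2 ≤ n)
    (V A : Matrix (Fin p) (Fin p) ℝ) (hV : V.PosSemidef) (hVA : V = A * Aᵀ)
    (z : Fin n → Ω → (Fin p → ℝ))
    (hmeas : ∀ i, Measurable (z i))
    (hindep : iIndepFun z μ)
    (hlaw : ∀ i, Measure.map (z i) μ = gaussianCov A) :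
    ∫ ω, ((n : ℝ) ^ 2 / (((n : ℝ) - 1) * ((n : ℝ) + 2))) *
        ((sampleCov n z ω * sampleCov n z ω).trace - (sampleCov n z ω).trace ^ 2 / n) ∂μ
      = (V * V).trace :=
  unbiased_estimator_trace_sq_general μ n p hn V A hVA z hmeas hindep hlaw
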